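/- Let Q be a closable, orthogonally additive Hermitean quadratic form on a dense domain D in a direct integral Hilbert space H. Then Q is countably orthogonally additive: for any countable measurable partition {Δᵢ}_{i∈ℕ} of Δ ∈ Σ(A) and any Φ ∈ D, Q(P_Δ Φ) = Σ_{i=1}^∞ Q(P_{Δᵢ} Φ), with the series convergent. -/

import Mathlib

/-!
Cut `Δ` into `Δ₀, …, Δₙ₋₁` and the tail `Tₙ = ⋃_{i ≥ n} Δᵢ`. Finite additivity gives
`Q (P Δ Φ) = ∑_{i<n} Q (P Δᵢ Φ) + Q (P Tₙ Φ)`, and Σ-boundedness makes the series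
`∑ Q (P Δᵢ Φ)` absolutely convergent. The vectors `P Tₙ Φ` tend to `0` by countable additivity
of `P`, while `Q (P Tₘ Φ - P Tₙ Φ)` is a block `∑_{m ≤ i < n}` of a convergent series, so
closability forces `Q (P Tₙ Φ) → 0`.
-/

open MeasureTheory Filter Topology Function

theorem Real.summable_of_abs_sum_le {ι : Type*} {a : ι → ℝ} {M : ℝ}
    (h : ∀ F : Finset ι, |∑ i ∈ F, a i| ≤ M) : Summable a := by
  classical
  refine .of_abs <| summable_of_sum_le (c := 2 * M) (fun i => abs_nonneg (a i)) fun F => ?_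
  have hsplit : ∑ i ∈ F, |a i| =
      ∑ i ∈ F.filter (0 ≤ a ·), a i - ∑ i ∈ F.filter (¬ 0 ≤ a ·), a i := by
    rw [← F.sum_filter_add_sum_filter_not (0 ≤ a ·), sub_eq_add_neg, ← Finset.sum_neg_distrib]
    congr 1 <;> refine Finset.sum_congr rfl fun i hi => ?_
    · exact abs_of_nonneg (Finset.mem_filter.1 hi).2
    · exact abs_of_neg (not_le.1 (Finset.mem_filter.1 hi).2)
  rw [hsplit]
  linarith [(abs_le.1 (h (F.filter (0 ≤ a ·)))).2, (abs_le.1 (h (F.filter (¬ 0 ≤ a ·)))).1]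

theorem Summable.tendsto_sum_Ico_zero {G : Type*} [AddCommGroup G] [TopologicalSpace G]
    [IsTopologicalAddGroup G] {a : ℕ → G} (ha : Summable a) :
    Tendsto (fun p : ℕ × ℕ => ∑ i ∈ Finset.Ico p.1 p.2, a i) atTop (𝓝 0) := by
  intro e he
  obtain ⟨S, hS⟩ := ha.vanishing he
  obtain ⟨N, hN⟩ := S.exists_nat_subset_range
  refine mem_map.2 <| eventually_atTop.2 ⟨(N, N), fun p hp => hS _ ?_⟩
  refine Finset.disjoint_left.2 fun i hi hiS => ?_
  exact (hp.1.trans (Finset.mem_Ico.1 hi).1).not_gt (Finset.mem_range.1 (hN hiS))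

theorem Set.iUnion_add_eq_biUnion_Ico_union {α : Type*} (s : ℕ → Set α) {k n : ℕ}
    (hkn : k ≤ n) :
    ⋃ i, s (i + k) = (⋃ i ∈ Finset.Ico k n, s i) ∪ ⋃ i, s (i + n) := by
  ext x
  simp only [Set.mem_iUnion, Set.mem_union, Finset.mem_Ico, exists_prop]
  constructor
  · rintro ⟨i, hi⟩
    by_cases h : i + k < n
    · exact .inl ⟨i + k, ⟨by omega, h⟩, hi⟩
    · exact .inr ⟨i + k - n, by rwa [Nat.sub_add_cancel (not_lt.1 h)]⟩
  · rintro (⟨i, ⟨hki, -⟩, hi⟩ | ⟨i, hi⟩)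
    · exact ⟨i - k, by rwa [Nat.sub_add_cancel hki]⟩
    · exact ⟨i + (n - k), by rwa [add_assoc, Nat.sub_add_cancel hkn]⟩

theorem Set.disjoint_biUnion_Ico_iUnion_add {α : Type*} {s : ℕ → Set α}
    (hd : Pairwise (Disjoint on s)) (k n : ℕ) :
    Disjoint (⋃ i ∈ Finset.Ico k n, s i) (⋃ i, s (i + n)) := by
  simp only [Set.disjoint_iUnion_left, Set.disjoint_iUnion_right]
  intro j i hi
  exact hd (by have := (Finset.mem_Ico.1 hi).2; omega)

theorem MeasurableSpace.isSetRing_measurableSet {A : Type*} [MeasurableSpace A] :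
    IsSetRing {s : Set A | MeasurableSet s} where
  empty_mem := .empty
  union_mem _ _ := .union
  sdiff_mem _ _ := .diff

section SetFunction

variable {A : Type*} [MeasurableSpace A]

def IsFinitelyAdditive {G : Type*} [AddCommMonoid G] (f : Set A → G) : Prop :=
  ∀ (N : ℕ) (s : Fin N → Set A), (∀ i, MeasurableSet (s i)) → Pairwise (Disjoint on s) →
    f (⋃ i, s i) = ∑ i, f (s i)

def IsCountablyAdditive {E : Type*} [AddCommMonoid E] [TopologicalSpace E] (μ : Set A → E) :
    Prop :=
  ∀ s : ℕ → Set A, (∀ i, MeasurableSet (s i)) → Pairwise (Disjoint on s) →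
    HasSum (fun i => μ (s i)) (μ (⋃ i, s i))

namespace IsFinitelyAdditive

variable {G : Type*} [AddCommMonoid G] {f : Set A → G}

theorem empty (hf : IsFinitelyAdditive f) : f ∅ = 0 := by
  simpa using hf 0 Fin.elim0 (fun i => i.elim0) fun i => i.elim0

theorem union (hf : IsFinitelyAdditive f) {s t : Set A} (hs : MeasurableSet s)
    (ht : MeasurableSet t) (hst : Disjoint s t) : f (s ∪ t) = f s + f t := by
  have hunion : s ∪ t = ⋃ i, ![s, t] i := by ext; simp
  rw [hunion, hf 2 ![s, t] (fun i => by fin_cases i <;> assumption), Fin.sum_univ_two]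
  · rfl
  · intro i j hij
    fin_cases i <;> fin_cases j <;> first | exact absurd rfl hij | exact hst | exact hst.symm

def toAddContent (hf : IsFinitelyAdditive f) : AddContent G {s : Set A | MeasurableSet s} :=
  MeasurableSpace.isSetRing_measurableSet.addContent_of_union f hf.empty hf.union

end IsFinitelyAdditive

namespace IsCountablyAdditive

variable {E : Type*} [AddCommGroup E] [TopologicalSpace E] [IsTopologicalAddGroup E] [T2Space E]
  {μ : Set A → E}

theorem empty (hμ : IsCountablyAdditive μ) : μ ∅ = 0 := by
  have h := hμ (fun _ => ∅) (fun _ => .empty) fun _ _ _ => disjoint_bot_left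
  simp only [Set.iUnion_empty] at h
  exact tendsto_nhds_unique tendsto_const_nhds h.summable.tendsto_atTop_zero

theorem union (hμ : IsCountablyAdditive μ) {s t : Set A} (hs : MeasurableSet s)
    (ht : MeasurableSet t) (hst : Disjoint s t) : μ (s ∪ t) = μ s + μ t := by
  set u : ℕ → Set A := fun i => if i = 0 then s else if i = 1 then t else ∅
  have hu : ∀ i, MeasurableSet (u i) := by
    intro i; simp only [u]; split_ifs <;> first | assumption | exact .empty
  have hud : Pairwise (Disjoint on u) := by
    intro i j hij
    simp only [onFun, u]
    split_ifs <;> first | omega | exact hst | exact hst.symm | simp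
  have hunion : ⋃ i, u i = s ∪ t := by
    ext x
    simp only [Set.mem_iUnion, Set.mem_union, u]
    constructor
    · rintro ⟨i, hi⟩
      split_ifs at hi <;> simp_all
    · rintro (hx | hx)
      exacts [⟨0, by simpa⟩, ⟨1, by simpa⟩]
  have hfinite : HasSum (fun i => μ (u i)) (∑ i ∈ Finset.range 2, μ (u i)) :=
    hasSum_sum_of_ne_finset_zero fun i hi => by
      simp only [Finset.mem_range, not_lt] at hi
      simp [u, show i ≠ 0 by omega, show i ≠ 1 by omega, hμ.empty]
  rw [← hunion, (hμ u hu hud).unique hfinite]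
  simp [Finset.sum_range_succ, u]

theorem tendsto_iUnion_add_zero (hμ : IsCountablyAdditive μ) {s : ℕ → Set A}
    (hs : ∀ i, MeasurableSet (s i)) (hd : Pairwise (Disjoint on s)) :
    Tendsto (fun n => μ (⋃ i, s (i + n))) atTop (𝓝 0) := by
  refine (tendsto_sum_nat_add fun i => μ (s i)).congr fun n => ?_
  exact (hμ _ (fun i => hs _) (hd.comp_of_injective (add_left_injective n))).tsum_eq

def toAddContent (hμ : IsCountablyAdditive μ) : AddContent E {s : Set A | MeasurableSet s} :=
  MeasurableSpace.isSetRing_measurableSet.addContent_of_union μ hμ.empty hμ.union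

@[simp]
theorem toAddContent_apply (hμ : IsCountablyAdditive μ) (s : Set A) : hμ.toAddContent s = μ s :=
  rfl

end IsCountablyAdditive

end SetFunction

section AddContent

variable {A : Type*} [MeasurableSpace A] {s : ℕ → Set A}

theorem addContent_biUnion_eq_sum {G : Type*} [AddCommMonoid G]
    (m : AddContent G {s : Set A | MeasurableSet s}) (hs : ∀ i, MeasurableSet (s i))
    (hd : Pairwise (Disjoint on s)) (F : Finset ℕ) :
    m (⋃ i ∈ F, s i) = ∑ i ∈ F, m (s i) :=
  addContent_biUnion_eq MeasurableSpace.isSetRing_measurableSet (fun i _ => hs i)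
    (hd.set_pairwise _)

theorem addContent_iUnion_add {G : Type*} [AddCommMonoid G]
    (m : AddContent G {s : Set A | MeasurableSet s}) (hs : ∀ i, MeasurableSet (s i))
    (hd : Pairwise (Disjoint on s)) {k n : ℕ} (hkn : k ≤ n) :
    m (⋃ i, s (i + k)) = ∑ i ∈ Finset.Ico k n, m (s i) + m (⋃ i, s (i + n)) := by
  have hring := MeasurableSpace.isSetRing_measurableSet (A := A)
  rw [Set.iUnion_add_eq_biUnion_Ico_union s hkn,
    addContent_union hring (hring.biUnion_mem _ fun i _ => hs i) (.iUnion fun i => hs _)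
      (Set.disjoint_biUnion_Ico_iUnion_add hd k n), addContent_biUnion_eq_sum m hs hd]

theorem summable_addContent_of_abs_le (m : AddContent ℝ {s : Set A | MeasurableSet s}) {M : ℝ}
    (hM : ∀ t, MeasurableSet t → |m t| ≤ M) (hs : ∀ i, MeasurableSet (s i))
    (hd : Pairwise (Disjoint on s)) : Summable fun i => m (s i) := by
  refine Real.summable_of_abs_sum_le (M := M) fun F => ?_
  rw [← addContent_biUnion_eq_sum m hs hd]
  exact hM _ (F.measurableSet_biUnion fun i _ => hs i)

theorem hasSum_addContent_of_tendsto_iUnion_add {G : Type*} [AddCommGroup G] [TopologicalSpace G]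
    [IsTopologicalAddGroup G] [T2Space G] (m : AddContent G {s : Set A | MeasurableSet s})
    (hs : ∀ i, MeasurableSet (s i)) (hd : Pairwise (Disjoint on s))
    (hsum : Summable fun i => m (s i))
    (htail : Tendsto (fun n => m (⋃ i, s (i + n))) atTop (𝓝 0)) :
    HasSum (fun i => m (s i)) (m (⋃ i, s i)) := by
  refine hsum.hasSum_iff_tendsto_nat.2 ?_
  have hsplit : ∀ n, ∑ i ∈ Finset.range n, m (s i) = m (⋃ i, s i) - m (⋃ i, s (i + n)) := by
    intro n
    simpa [eq_sub_iff_add_eq] using (addContent_iUnion_add m hs hd (Nat.zero_le n)).symm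
  simpa [hsplit] using tendsto_const_nhds.sub htail

end AddContent

section ClosableForm

variable {A R H : Type*} [MeasurableSpace A] [Ring R] [AddCommGroup H] [Module R H]
  [TopologicalSpace H] [IsTopologicalAddGroup H] [T2Space H]
  {P : Set A → H →L[R] H} {D : Submodule R H} {Q : H → ℝ} {s : ℕ → Set A}

theorem form_iUnion_add_sub_eq_sum_Ico (hP : ∀ x, IsCountablyAdditive fun t => P t x)
    {ψ : H} (hQ : IsFinitelyAdditive fun t => Q (P t ψ)) (hs : ∀ i, MeasurableSet (s i))
    (hd : Pairwise (Disjoint on s)) {k n : ℕ} (hkn : k ≤ n) :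
    Q (P (⋃ i, s (i + k)) ψ - P (⋃ i, s (i + n)) ψ) = ∑ i ∈ Finset.Ico k n, Q (P (s i) ψ) := by
  have hvec := addContent_iUnion_add (hP ψ).toAddContent hs hd hkn
  rw [← addContent_biUnion_eq_sum _ hs hd] at hvec
  simp only [IsCountablyAdditive.toAddContent_apply] at hvec
  rw [hvec, add_sub_cancel_right]
  exact addContent_biUnion_eq_sum hQ.toAddContent hs hd _

theorem tendsto_form_iUnion_add_zero (hP : ∀ x, IsCountablyAdditive fun t => P t x)
    (hstab : ∀ t, MeasurableSet t → ∀ ψ ∈ D, P t ψ ∈ D)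
    (hclos : ∀ Φ : ℕ → H, (∀ n, Φ n ∈ D) → Tendsto Φ atTop (𝓝 0) →
      Tendsto (fun p : ℕ × ℕ => Q (Φ p.1 - Φ p.2)) atTop (𝓝 0) →
      Tendsto (fun n => Q (Φ n)) atTop (𝓝 0))
    (hQ : ∀ ψ ∈ D, IsFinitelyAdditive fun t => Q (P t ψ))
    (hs : ∀ i, MeasurableSet (s i)) (hd : Pairwise (Disjoint on s))
    (hsum : ∀ ψ ∈ D, Summable fun i => Q (P (s i) ψ)) {Φ : H} (hΦ : Φ ∈ D) :
    Tendsto (fun n => Q (P (⋃ i, s (i + n)) Φ)) atTop (𝓝 0) := by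
  set Ψ : ℕ → H := fun n => P (⋃ i, s (i + n)) Φ
  refine hclos Ψ (fun n => hstab _ (.iUnion fun i => hs _) Φ hΦ)
    ((hP Φ).tendsto_iUnion_add_zero hs hd) ?_
  have hswap : Tendsto Prod.swap (atTop : Filter (ℕ × ℕ)) atTop :=
    tendsto_atTop_atTop.2 fun p => ⟨p.swap, fun _ h => ⟨h.2, h.1⟩⟩
  have hlim := ((hsum Φ hΦ).tendsto_sum_Ico_zero).add
    (((hsum (-Φ) (neg_mem hΦ)).tendsto_sum_Ico_zero).comp hswap)
  rw [add_zero] at hlim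
  refine hlim.congr fun ⟨k, n⟩ => ?_
  simp only [comp_apply, Prod.fst_swap, Prod.snd_swap]
  -- `Q` need not be even, so for `n ≤ k` the difference is read off the series of `-Φ`.
  rcases le_total k n with hkn | hnk
  · rw [Finset.Ico_eq_empty_of_le hkn, Finset.sum_empty, add_zero,
      form_iUnion_add_sub_eq_sum_Ico hP (hQ Φ hΦ) hs hd hkn]
  · have hneg : Ψ k - Ψ n = P (⋃ i, s (i + n)) (-Φ) - P (⋃ i, s (i + k)) (-Φ) := by
      simp only [Ψ, map_neg]; abel
    rw [Finset.Ico_eq_empty_of_le hnk, Finset.sum_empty, zero_add, hneg,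
      form_iUnion_add_sub_eq_sum_Ico hP (hQ (-Φ) (neg_mem hΦ)) hs hd hnk]

end ClosableForm

theorem stmt6_general {A H : Type*} [MeasurableSpace A]
    [NormedAddCommGroup H] [InnerProductSpace ℂ H]
    (P : Set A → H →L[ℂ] H)
    (hPsigma : ∀ (Δi : ℕ → Set A), (∀ i, MeasurableSet (Δi i)) →
      Pairwise (Function.onFun Disjoint Δi) →
      ∀ x : H, HasSum (fun i => P (Δi i) x) (P (⋃ i, Δi i) x))
    (D : Submodule ℂ H)
    (Q : H → ℝ)
    -- closability
    (hclos : ∀ Φ : ℕ → H, (∀ n, Φ n ∈ D) → Tendsto (fun n => Φ n) atTop (nhds 0) →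
      Tendsto (fun p : ℕ × ℕ => Q (Φ p.1 - Φ p.2)) atTop (nhds 0) →
      Tendsto (fun n => Q (Φ n)) atTop (nhds 0))
    -- orthogonal additivity: stability of the domain
    (hstab : ∀ Δ, MeasurableSet Δ → ∀ Φ ∈ D, P Δ Φ ∈ D)
    -- orthogonal additivity: Σ-boundedness
    (hbnd : ∀ Φ ∈ D, ∃ M > (0 : ℝ), ∀ Δ, MeasurableSet Δ → |Q (P Δ Φ)| < M)
    -- orthogonal additivity: finite additivity
    (hadd : ∀ (N : ℕ) (Δi : Fin N → Set A) (Δ : Set A), MeasurableSet Δ →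
      (∀ i, MeasurableSet (Δi i)) → Pairwise (Function.onFun Disjoint Δi) →
      (⋃ i, Δi i) = Δ → ∀ Φ ∈ D, Q (P Δ Φ) = ∑ i, Q (P (Δi i) Φ))
 :
    -- countable orthogonal additivity
    ∀ (Δi : ℕ → Set A) (Δ : Set A), MeasurableSet Δ →
      (∀ i, MeasurableSet (Δi i)) → Pairwise (Function.onFun Disjoint Δi) →
      (⋃ i, Δi i) = Δ → ∀ Φ ∈ D,
        HasSum (fun i => Q (P (Δi i) Φ)) (Q (P Δ Φ)) := by
  rintro Δi _ - hmeas hdisj rfl Φ hΦ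
  have hP : ∀ x, IsCountablyAdditive fun t => P t x := fun x t ht htd => hPsigma t ht htd x
  have hQ : ∀ ψ ∈ D, IsFinitelyAdditive fun t => Q (P t ψ) := fun ψ hψ N t ht htd =>
    hadd N t _ (.iUnion ht) ht htd rfl ψ hψ
  have hsum : ∀ ψ ∈ D, Summable fun i => Q (P (Δi i) ψ) := fun ψ hψ => by
    obtain ⟨M, -, hM⟩ := hbnd ψ hψ
    exact summable_addContent_of_abs_le (hQ ψ hψ).toAddContent (fun t ht => (hM t ht).le)
      hmeas hdisj
  exact hasSum_addContent_of_tendsto_iUnion_add (hQ Φ hΦ).toAddContent hmeas hdisj (hsum Φ hΦ)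
    (tendsto_form_iUnion_add_zero hP hstab hclos hQ hmeas hdisj hsum hΦ)

/-- STATEMENT 5: For a closable, orthogonally additive Hermitean quadratic form on a dense
domain of a direct integral Hilbert space (the direct integral structure is encoded by the
projection-valued measure `P`), the tails of partitions are negligible:
the form is countably orthogonally additive. (STATEMENT 6) -/
theorem stmt6 {A H : Type*} [MeasurableSpace A]
    [NormedAddCommGroup H] [InnerProductSpace ℂ H] [CompleteSpace H]
    (P : Set A → H →L[ℂ] H)
    (hPsa : ∀ Δ, MeasurableSet Δ → IsSelfAdjoint (P Δ))
    (hPmul : ∀ Δ₁ Δ₂, MeasurableSet Δ₁ → MeasurableSet Δ₂ →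
      (P Δ₁).comp (P Δ₂) = P (Δ₁ ∩ Δ₂))
    (hPuniv : P Set.univ = 1)
    (hPsigma : ∀ (Δi : ℕ → Set A), (∀ i, MeasurableSet (Δi i)) →
      Pairwise (Function.onFun Disjoint Δi) →
      ∀ x : H, HasSum (fun i => P (Δi i) x) (P (⋃ i, Δi i) x))
    (D : Submodule ℂ H) (hdense : Dense (D : Set H))
    (Q : H → ℝ)
    -- closability
    (hclos : ∀ Φ : ℕ → H, (∀ n, Φ n ∈ D) → Tendsto (fun n => Φ n) atTop (nhds 0) →
      Tendsto (fun p : ℕ × ℕ => Q (Φ p.1 - Φ p.2)) atTop (nhds 0) →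
      Tendsto (fun n => Q (Φ n)) atTop (nhds 0))
    -- orthogonal additivity: stability of the domain
    (hstab : ∀ Δ, MeasurableSet Δ → ∀ Φ ∈ D, P Δ Φ ∈ D)
    -- orthogonal additivity: Σ-boundedness
    (hbnd : ∀ Φ ∈ D, ∃ M > (0 : ℝ), ∀ Δ, MeasurableSet Δ → |Q (P Δ Φ)| < M)
    -- orthogonal additivity: finite additivity
    (hadd : ∀ (N : ℕ) (Δi : Fin N → Set A) (Δ : Set A), MeasurableSet Δ →
      (∀ i, MeasurableSet (Δi i)) → Pairwise (Function.onFun Disjoint Δi) →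
      (⋃ i, Δi i) = Δ → ∀ Φ ∈ D, Q (P Δ Φ) = ∑ i, Q (P (Δi i) Φ))
 :
    -- countable orthogonal additivity
    ∀ (Δi : ℕ → Set A) (Δ : Set A), MeasurableSet Δ →
      (∀ i, MeasurableSet (Δi i)) → Pairwise (Function.onFun Disjoint Δi) →
      (⋃ i, Δi i) = Δ → ∀ Φ ∈ D,
        HasSum (fun i => Q (P (Δi i) Φ)) (Q (P Δ Φ)) :=
  stmt6_general P hPsigma D Q hclos hstab hbnd hadd
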